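/- arXiv:2510.15932 — 2 statements merged into one kernel-verified Lean document; each statement's English description precedes it below -/
import Mathlib

section
/- Let F be a field of characteristic zero and let Aᵢ, Bᵢ ∈ M_{mᵢ}(F) for 1 ≤ i ≤ s be such that Aᵢ and Bᵢ are polynomially equivalent for each i. If the characteristic polynomials of A₁, …, A_s are pairwise coprime and the characteristic polynomials of B₁, …, B_s are pairwise coprime, then the block-diagonal matrices A = diag(A₁, …, A_s) and B = diag(B₁, …, B_s) are polynomially equivalent. -/
/-!
Write `Bᵢ = fᵢ(Aᵢ)`. By the Chinese remainder theorem for the pairwise coprime characteristic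
polynomials of the `Aᵢ` there is one polynomial `p` with `p ≡ fᵢ` modulo `charpoly Aᵢ` for all
`i`; by Cayley–Hamilton `p(Aᵢ) = fᵢ(Aᵢ) = Bᵢ`, and evaluation commutes with taking block diagonal
matrices, so `p(diag A) = diag B`. Symmetrically `diag A` is a polynomial in `diag B`.
-/

/-- `A` and `B` are polynomially equivalent: each is a polynomial in the other. -/
def PolyEquiv {α : Type*} [Fintype α] [DecidableEq α] {F : Type*} [Field F]
    (A B : Matrix α α F) : Prop :=
  ∃ f g : Polynomial F, B = Polynomial.aeval A f ∧ A = Polynomial.aeval B g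

open Function Polynomial

theorem exists_forall_dvd_sub_of_pairwise_isCoprime {R ι : Type*} [CommRing R] [Finite ι]
    {p : ι → R} (hp : Pairwise (IsCoprime on p)) (x : ι → R) :
    ∃ r : R, ∀ i, p i ∣ r - x i := by
  have hspan : Pairwise (IsCoprime on fun i => Ideal.span {p i}) := fun i j hij =>
    (Ideal.isCoprime_span_singleton_iff _ _).mpr (hp hij)
  obtain ⟨r, hr⟩ := Ideal.exists_forall_sub_mem_ideal hspan x
  exact ⟨r, fun i => Ideal.mem_span_singleton.mp (hr i)⟩

namespace Matrix

variable {ι : Type*} [Fintype ι] [DecidableEq ι] {n : ι → Type*} [∀ i, Fintype (n i)]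
  [∀ i, DecidableEq (n i)] {R : Type*} [CommRing R]

theorem aeval_eq_aeval_of_charpoly_dvd_sub {m : Type*} [Fintype m] [DecidableEq m]
    (M : Matrix m m R) {p q : R[X]} (h : M.charpoly ∣ p - q) : aeval M p = aeval M q := by
  obtain ⟨c, hc⟩ := h
  rw [← sub_eq_zero, ← map_sub, hc, map_mul, aeval_self_charpoly, zero_mul]

variable (n R) in
def blockDiagonal'AlgHom : (∀ i, Matrix (n i) (n i) R) →ₐ[R] Matrix (Σ i, n i) (Σ i, n i) R where
  __ := blockDiagonal'RingHom n R
  commutes' c := by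
    simp [Pi.algebraMap_def, algebraMap_eq_diagonal, blockDiagonal'_diagonal]

theorem aeval_blockDiagonal' (A : ∀ i, Matrix (n i) (n i) R) (p : R[X]) :
    aeval (blockDiagonal' A) p = blockDiagonal' fun i => aeval (A i) p := by
  have h := aeval_algHom_apply (blockDiagonal'AlgHom n R) A p
  rwa [aeval_pi_apply] at h

theorem exists_aeval_blockDiagonal'_eq (A : ∀ i, Matrix (n i) (n i) R)
    (hA : Pairwise (IsCoprime on fun i => (A i).charpoly)) (f : ι → R[X]) :
    ∃ p : R[X], aeval (blockDiagonal' A) p = blockDiagonal' fun i => aeval (A i) (f i) := by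
  obtain ⟨p, hp⟩ := exists_forall_dvd_sub_of_pairwise_isCoprime hA f
  refine ⟨p, ?_⟩
  rw [aeval_blockDiagonal']
  exact congrArg _ (funext fun i => aeval_eq_aeval_of_charpoly_dvd_sub (A i) (hp i))

end Matrix

theorem polyEquiv_blockDiagonal_general {s : ℕ} {m : Fin s → ℕ} {F : Type*} [Field F]
    (A B : ∀ i : Fin s, Matrix (Fin (m i)) (Fin (m i)) F)
    (hAB : ∀ i : Fin s, PolyEquiv (A i) (B i))
    (hA : ∀ i j : Fin s, i ≠ j → IsCoprime (A i).charpoly (A j).charpoly)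
    (hB : ∀ i j : Fin s, i ≠ j → IsCoprime (B i).charpoly (B j).charpoly) :
    PolyEquiv (Matrix.blockDiagonal' A) (Matrix.blockDiagonal' B) := by
  choose f g hf hg using hAB
  obtain ⟨p, hp⟩ := Matrix.exists_aeval_blockDiagonal'_eq A (fun i j => hA i j) f
  obtain ⟨q, hq⟩ := Matrix.exists_aeval_blockDiagonal'_eq B (fun i j => hB i j) g
  refine ⟨p, q, ?_, ?_⟩
  · rw [hp, ← funext hf]
  · rw [hq, ← funext hg]

theorem polyEquiv_blockDiagonal {s : ℕ} {m : Fin s → ℕ} {F : Type*} [Field F] [CharZero F]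
    (A B : ∀ i : Fin s, Matrix (Fin (m i)) (Fin (m i)) F)
    (hAB : ∀ i : Fin s, PolyEquiv (A i) (B i))
    (hA : ∀ i j : Fin s, i ≠ j → IsCoprime (A i).charpoly (A j).charpoly)
    (hB : ∀ i j : Fin s, i ≠ j → IsCoprime (B i).charpoly (B j).charpoly) :
    PolyEquiv (Matrix.blockDiagonal' A) (Matrix.blockDiagonal' B) :=
  polyEquiv_blockDiagonal_general A B hAB hA hB
end

section
/- Let F be a field of characteristic zero and let A ∈ GLₙ(F) have n distinct eigenvalues in F. Then the dimension of 𝒞𝓛(A) as an F-vector space equals the number of eigenvalues λ of A such that −λ is also an eigenvalue of A. -/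
/-- The clifforder of a matrix `A` (all matrices anti-commuting with `A`), as an
`F`-linear subspace of the matrix space. -/
def clifforder {n : ℕ} {F : Type*} [Field F] (A : Matrix (Fin n) (Fin n) F) :
    Submodule F (Matrix (Fin n) (Fin n) F) where
  carrier := {X | A * X = -(X * A)}
  add_mem' := by
    intro X Y hX hY
    simp only [Set.mem_setOf_eq] at *
    rw [mul_add, add_mul, hX, hY, neg_add]
  zero_mem' := by simp
  smul_mem' := by
    intro c X hX
    simp only [Set.mem_setOf_eq] at *
    rw [mul_smul_comm, smul_mul_assoc, hX, smul_neg]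

/-!
Conjugation is an algebra automorphism of the matrix algebra, so it carries `𝒞𝓛(A)` onto
`𝒞𝓛` of the conjugated matrix. Eigenvectors for `n` distinct eigenvalues form a basis, so `A` is
conjugate to `D = diagonal λ`. Entrywise, `D X + X D = 0` says `(λᵢ + λⱼ) Xᵢⱼ = 0`, so `𝒞𝓛(D)`
consists of the matrices supported on the pairs with `λᵢ + λⱼ = 0`. As the `λᵢ` are distinct,
such a pair is determined by `j`, and the `λⱼ` occurring are exactly the eigenvalues `μ` with
`-μ` also an eigenvalue.
-/

open Matrix Module Module.End

section Clifforder

variable {n : ℕ} {F : Type*} [Field F]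

theorem mem_clifforder {A X : Matrix (Fin n) (Fin n) F} :
    X ∈ clifforder A ↔ A * X = -(X * A) := Iff.rfl

theorem map_clifforder (e : Matrix (Fin n) (Fin n) F ≃ₐ[F] Matrix (Fin n) (Fin n) F)
    (A : Matrix (Fin n) (Fin n) F) :
    (clifforder A).map e.toLinearMap = clifforder (e A) := by
  ext X
  rw [← e.toLinearEquiv_toLinearMap, Submodule.mem_map_equiv, mem_clifforder, mem_clifforder,
    ← e.injective.eq_iff]
  simp

theorem finrank_clifforder_algEquiv (e : Matrix (Fin n) (Fin n) F ≃ₐ[F] Matrix (Fin n) (Fin n) F)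
    (A : Matrix (Fin n) (Fin n) F) :
    finrank F (clifforder (e A)) = finrank F (clifforder A) := by
  rw [← map_clifforder, ← e.toLinearEquiv_toLinearMap]
  exact e.toLinearEquiv.finrank_map_eq _

theorem mem_clifforder_diagonal {d : Fin n → F} {X : Matrix (Fin n) (Fin n) F} :
    X ∈ clifforder (diagonal d) ↔ ∀ i j, d i + d j ≠ 0 → X i j = 0 := by
  rw [mem_clifforder, ← Matrix.ext_iff]
  refine forall₂_congr fun i j => ?_
  rw [diagonal_mul, neg_apply, mul_diagonal, ← or_iff_not_imp_left, ← mul_eq_zero]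
  constructor <;> intro h <;> linear_combination h

open Classical in
noncomputable def clifforderDiagonalEquiv (d : Fin n → F) :
    clifforder (diagonal d) ≃ₗ[F] ({p : Fin n × Fin n // d p.1 + d p.2 = 0} → F) where
  toFun X p := X.1 p.1.1 p.1.2
  map_add' _ _ := rfl
  map_smul' _ _ := rfl
  invFun g := ⟨of fun i j => if h : d i + d j = 0 then g ⟨(i, j), h⟩ else 0,
    mem_clifforder_diagonal.2 fun i j h => by simp [h]⟩
  left_inv X := by
    ext i j
    by_cases h : d i + d j = 0
    · simp [h]
    · simp [h, mem_clifforder_diagonal.1 X.2 i j h]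
  right_inv g := by
    ext p
    simp [p.2]

theorem finrank_clifforder_diagonal (d : Fin n → F) :
    finrank F (clifforder (diagonal d)) = Nat.card {p : Fin n × Fin n // d p.1 + d p.2 = 0} := by
  classical
  rw [(clifforderDiagonalEquiv d).finrank_eq, finrank_fintype_fun_eq_card,
    Nat.card_eq_fintype_card]

end Clifforder

theorem natCard_add_eq_zero_eq_ncard {ι G : Type*} [AddGroup G] {d : ι → G}
    (hd : Function.Injective d) :
    Nat.card {p : ι × ι // d p.1 + d p.2 = 0} =
      {μ : G | μ ∈ Set.range d ∧ -μ ∈ Set.range d}.ncard := by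
  rw [← Nat.card_coe_set_eq]
  refine Nat.card_congr (Equiv.ofBijective
    (fun p => ⟨d p.1.2, Set.mem_range_self _, p.1.1, eq_neg_of_add_eq_zero_left p.2⟩) ⟨?_, ?_⟩)
  · rintro ⟨⟨i, j⟩, hij⟩ ⟨⟨i', j'⟩, hij'⟩ h
    obtain rfl : j = j' := hd (congrArg Subtype.val h)
    obtain rfl : i = i' :=
      hd ((eq_neg_of_add_eq_zero_left hij).trans (eq_neg_of_add_eq_zero_left hij').symm)
    rfl
  · rintro ⟨-, ⟨j, rfl⟩, i, hi⟩
    exact ⟨⟨(i, j), by rw [hi, neg_add_cancel]⟩, rfl⟩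

theorem LinearMap.toMatrix_eq_diagonal {R M ι : Type*} [CommSemiring R] [AddCommMonoid M]
    [Module R M] [Fintype ι] [DecidableEq ι] {f : M →ₗ[R] M} {lam : ι → R} (b : Basis ι R M)
    (h : ∀ i, f (b i) = lam i • b i) :
    LinearMap.toMatrix b b f = diagonal lam := by
  ext i j
  rw [LinearMap.toMatrix_apply, h j, map_smul, b.repr_self, diagonal_apply]
  obtain rfl | hij := eq_or_ne i j <;> simp [*]

section Diagonalization

variable {F ι : Type*} [Field F] [Fintype ι]

theorem exists_basis_hasEigenvector {V : Type*} [AddCommGroup V] [Module F V]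
    [FiniteDimensional F V] (f : End F V) {lam : ι → F} (hlam : Function.Injective lam)
    (hcard : Fintype.card ι = finrank F V) (h : ∀ i, f.HasEigenvalue (lam i)) :
    ∃ b : Basis ι F V, ∀ i, f.HasEigenvector (lam i) (b i) := by
  choose v hv using fun i => (h i).exists_hasEigenvector
  exact ⟨basisOfLinearIndependentOfCardEqFinrank' v
    (f.eigenvectors_linearIndependent' lam hlam v hv) hcard, by simpa using hv⟩

theorem Matrix.exists_algEquiv_eq_diagonal [DecidableEq ι] (A : Matrix ι ι F) {lam : ι → F}
    (hlam : Function.Injective lam) (h : ∀ i, A.charpoly.IsRoot (lam i)) :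
    ∃ e : Matrix ι ι F ≃ₐ[F] Matrix ι ι F, e A = diagonal lam := by
  have hA : ∀ i, HasEigenvalue (toLin' A) (lam i) := fun i => by
    rw [hasEigenvalue_iff_isRoot_charpoly, Matrix.charpoly_toLin']
    exact h i
  obtain ⟨b, hb⟩ :=
    exists_basis_hasEigenvector (toLin' A) hlam (finrank_fintype_fun_eq_card F).symm hA
  exact ⟨toLinAlgEquiv'.trans (LinearMap.toMatrixAlgEquiv b),
    LinearMap.toMatrix_eq_diagonal b fun i => (hb i).apply_eq_smul⟩

end Diagonalization

theorem finrank_clifforder_eq_general {n : ℕ} {F : Type*} [Field F]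
    (A : Matrix (Fin n) (Fin n) F)
    (heig : ∃ lam : Fin n → F, Function.Injective lam ∧ ∀ i, A.charpoly.IsRoot (lam i)) :
    Module.finrank F (clifforder A) =
      {μ : F | A.charpoly.IsRoot μ ∧ A.charpoly.IsRoot (-μ)}.ncard := by
  obtain ⟨lam, hlam, hroot⟩ := heig
  obtain ⟨e, he⟩ := A.exists_algEquiv_eq_diagonal hlam hroot
  have hroots : ∀ μ, A.charpoly.IsRoot μ ↔ μ ∈ Set.range lam := fun μ => by
    rw [← Matrix.mem_spectrum_iff_isRoot_charpoly, ← AlgEquiv.spectrum_eq e, he, spectrum_diagonal]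
  simp only [hroots]
  rw [← finrank_clifforder_algEquiv e, he, finrank_clifforder_diagonal,
    natCard_add_eq_zero_eq_ncard hlam]

theorem finrank_clifforder_eq {n : ℕ} {F : Type*} [Field F] [CharZero F]
    (A : Matrix (Fin n) (Fin n) F) (hA : IsUnit A)
    (heig : ∃ lam : Fin n → F, Function.Injective lam ∧ ∀ i, A.charpoly.IsRoot (lam i)) :
    Module.finrank F (clifforder A) =
      {μ : F | A.charpoly.IsRoot μ ∧ A.charpoly.IsRoot (-μ)}.ncard :=
  finrank_clifforder_eq_general A heig
end
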